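/- arXiv:2010.01076 — 2 statements merged into one kernel-verified Lean document; each statement's English description precedes it below -/
import Mathlib

section
/- If x̃ is an operating point for P ∈ ℝⁿ such that x̃ ≥ x entrywise for every operating point x for P (a high-voltage solution), then R(x̃, V_S) ≤ R(x, V_S) for every operating point x for P. If moreover x̃ > x entrywise for every operating point x for P with x ≠ x̃ (a strict high-voltage solution), then R(x̃, V_S) < R(x, V_S) for every operating point x for P with x ≠ x̃, so x̃ is the unique dissipation-minimizing operating point for P. -/
open Matrix Set

noncomputable section

/-- `A` is irreducible: for every nonempty proper subset `α` of the index set,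
the submatrix `A[α, αᶜ]` is not the zero matrix. -/
def IsIrred {k : ℕ} (A : Matrix (Fin k) (Fin k) ℝ) : Prop :=
  ∀ α : Finset (Fin k), α.Nonempty → α ≠ Finset.univ → ∃ i ∈ α, ∃ j ∈ αᶜ, A i j ≠ 0

/-- `A` is a Z-matrix: off-diagonal entries are nonpositive. -/
def IsZmat {k : ℕ} (A : Matrix (Fin k) (Fin k) ℝ) : Prop :=
  ∀ i j, i ≠ j → A i j ≤ 0

/-- `A` is an M-matrix: a Z-matrix all of whose eigenvalues have nonnegative real part. -/
def IsMmat {k : ℕ} (A : Matrix (Fin k) (Fin k) ℝ) : Prop :=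
  IsZmat A ∧ ∀ μ ∈ spectrum ℂ (A.map (Complex.ofReal)), 0 ≤ μ.re

/-- `A` is a nonsingular M-matrix: a Z-matrix all of whose eigenvalues have positive real part. -/
def IsNonsingMmat {k : ℕ} (A : Matrix (Fin k) (Fin k) ℝ) : Prop :=
  IsZmat A ∧ ∀ μ ∈ spectrum ℂ (A.map (Complex.ofReal)), 0 < μ.re

/-- `P_c(x) = [x] Y (V* − x)`. -/
def Pc {k : ℕ} (Y : Matrix (Fin k) (Fin k) ℝ) (Vs : Fin k → ℝ) (x : Fin k → ℝ) : Fin k → ℝ :=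
  Matrix.diagonal x *ᵥ (Y *ᵥ (Vs - x))

/-- Jacobian of `P_c` at `x`: `J(x) = [Y(V* − x)] − [x] Y`. -/
def Jmat {k : ℕ} (Y : Matrix (Fin k) (Fin k) ℝ) (Vs : Fin k → ℝ) (x : Fin k → ℝ) :
    Matrix (Fin k) (Fin k) ℝ :=
  Matrix.diagonal (Y *ᵥ (Vs - x)) - Matrix.diagonal x * Y

/-- long-term voltage stable operating points. -/
def Dset {k : ℕ} (Y : Matrix (Fin k) (Fin k) ℝ) (Vs : Fin k → ℝ) : Set (Fin k → ℝ) :=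
  {x | (∀ i, 0 < x i) ∧ IsUnit (Jmat Y Vs x).det ∧ ∀ i j, (Jmat Y Vs x)⁻¹ i j < 0}

/-- feasible power demands. -/
def Fset {k : ℕ} (Y : Matrix (Fin k) (Fin k) ℝ) (Vs : Fin k → ℝ) : Set (Fin k → ℝ) :=
  {P | ∃ x, (∀ i, 0 < x i) ∧ Pc Y Vs x = P}

/-- `h(λ) = (1/2)([λ] Y + Y [λ])`. -/
def hmat {k : ℕ} (Y : Matrix (Fin k) (Fin k) ℝ) (l : Fin k → ℝ) : Matrix (Fin k) (Fin k) ℝ :=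
  (1/2 : ℝ) • (Matrix.diagonal l * Y + Y * Matrix.diagonal l)

/-- `Λ₁ = {λ ∈ Λ : λ > 0, 1ᵀλ = 1}`. -/
def Lam1 {k : ℕ} (Y : Matrix (Fin k) (Fin k) ℝ) : Set (Fin k → ℝ) :=
  {l | (hmat Y l).PosDef ∧ (∀ i, 0 < l i) ∧ ∑ i, l i = 1}

/-- `φ(λ) = (1/2) h(λ)⁻¹ [λ] I*` where `I* = Y V*`. -/
def phiv {k : ℕ} (Y : Matrix (Fin k) (Fin k) ℝ) (Vs : Fin k → ℝ) (l : Fin k → ℝ) : Fin k → ℝ :=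
  (1/2 : ℝ) • ((hmat Y l)⁻¹ *ᵥ (Matrix.diagonal l *ᵥ (Y *ᵥ Vs)))

/-- `‖x‖_{h(λ)}²  = xᵀ h(λ) x`. -/
def qnorm {k : ℕ} (Y : Matrix (Fin k) (Fin k) ℝ) (l x : Fin k → ℝ) : ℝ :=
  x ⬝ᵥ (hmat Y l *ᵥ x)

/-- The half-space `H_λ`. -/
def Hset {k : ℕ} (Y : Matrix (Fin k) (Fin k) ℝ) (Vs : Fin k → ℝ) (l : Fin k → ℝ) :
    Set (Fin k → ℝ) :=
  {y | l ⬝ᵥ y ≤ qnorm Y l (phiv Y Vs l)}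

/-- The load-load block `Y_LL` of `Y`. -/
def blockLL (n m : ℕ) (Y : Matrix (Fin (n + m)) (Fin (n + m)) ℝ) : Matrix (Fin n) (Fin n) ℝ :=
  Matrix.of fun i j => Y (Fin.castAdd m i) (Fin.castAdd m j)

/-- The load-source block `Y_LS` of `Y`. -/
def blockLS (n m : ℕ) (Y : Matrix (Fin (n + m)) (Fin (n + m)) ℝ) : Matrix (Fin n) (Fin m) ℝ :=
  Matrix.of fun i j => Y (Fin.castAdd m i) (Fin.natAdd n j)

/-- Total dissipated power `R(V_L, V_S) = (V_L; V_S)ᵀ Y (V_L; V_S)`. -/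
def Rdiss (n m : ℕ) (Y : Matrix (Fin (n + m)) (Fin (n + m)) ℝ)
    (VS : Fin m → ℝ) (x : Fin n → ℝ) : ℝ :=
  Fin.append x VS ⬝ᵥ (Y *ᵥ Fin.append x VS)


/-! At an operating point `x`, summing `P = [x] Y_LL (V_L^* - x)` gives
`xᵀ Y_LL x = xᵀ I_L^* - ∑ P`, so the block expansion of `R` collapses to
`R(x, V_S) = R(0, V_S) - ∑ P - xᵀ I_L^*`: on the operating points for `P` the dissipation is
an affine function of `x`, decreasing in the direction of `I_L^* = -Y_LS V_S`. This vector is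
nonnegative because `Y` is a Z-matrix and `V_S > 0`, and nonzero because irreducibility links
some load to some source. So a (strict) high-voltage solution (strictly) minimizes `R`. -/

theorem dotProduct_lt_dotProduct_of_lt_of_nonneg {R ι : Type*} [Semiring R] [PartialOrder R]
    [IsStrictOrderedRing R] [Fintype ι] {u v w : ι → R} (huv : ∀ i, u i < v i) (hw : 0 ≤ w)
    (hw' : ∃ i, 0 < w i) : u ⬝ᵥ w < v ⬝ᵥ w := by
  obtain ⟨i, hi⟩ := hw'
  exact Finset.sum_lt_sum (fun j _ => mul_le_mul_of_nonneg_right (huv j).le (hw j))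
    ⟨i, Finset.mem_univ _, mul_lt_mul_of_pos_right (huv i) hi⟩

theorem sum_Pc {k : ℕ} (A : Matrix (Fin k) (Fin k) ℝ) (V x : Fin k → ℝ) :
    ∑ i, Pc A V x i = x ⬝ᵥ (A *ᵥ (V - x)) := by
  simp [Pc, dotProduct, mulVec_diagonal]

theorem Fin.castAdd_ne_natAdd {n m : ℕ} (i : Fin n) (j : Fin m) :
    Fin.castAdd m i ≠ Fin.natAdd n j := by
  simp [Fin.ext_iff]; omega

section

variable {n m : ℕ}

theorem Fin.append_dotProduct_mulVec_append {R : Type*} [CommSemiring R]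
    (Y : Matrix (Fin (n + m)) (Fin (n + m)) R) (u : Fin n → R) (w : Fin m → R) :
    Fin.append u w ⬝ᵥ (Y *ᵥ Fin.append u w) =
      u ⬝ᵥ (Y.submatrix (Fin.castAdd m) (Fin.castAdd m) *ᵥ u)
        + u ⬝ᵥ (Y.submatrix (Fin.castAdd m) (Fin.natAdd n) *ᵥ w)
        + w ⬝ᵥ (Y.submatrix (Fin.natAdd n) (Fin.castAdd m) *ᵥ u)
        + w ⬝ᵥ (Y.submatrix (Fin.natAdd n) (Fin.natAdd n) *ᵥ w) := by
  simp only [dotProduct, mulVec, submatrix_apply, Fin.sum_univ_add, Fin.append_left,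
    Fin.append_right, mul_add, Finset.sum_add_distrib]
  ring

theorem blockLL_eq_submatrix (Y : Matrix (Fin (n + m)) (Fin (n + m)) ℝ) :
    blockLL n m Y = Y.submatrix (Fin.castAdd m) (Fin.castAdd m) := rfl

theorem blockLS_eq_submatrix (Y : Matrix (Fin (n + m)) (Fin (n + m)) ℝ) :
    blockLS n m Y = Y.submatrix (Fin.castAdd m) (Fin.natAdd n) := rfl

theorem Rdiss_eq {Y : Matrix (Fin (n + m)) (Fin (n + m)) ℝ} (hsym : Y.IsSymm)
    (VS : Fin m → ℝ) (x : Fin n → ℝ) :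
    Rdiss n m Y VS x =
      x ⬝ᵥ (blockLL n m Y *ᵥ x) + 2 * (x ⬝ᵥ (blockLS n m Y *ᵥ VS)) + Rdiss n m Y VS 0 := by
  have hSL : VS ⬝ᵥ (Y.submatrix (Fin.natAdd n) (Fin.castAdd m) *ᵥ x)
      = x ⬝ᵥ (blockLS n m Y *ᵥ VS) := by
    rw [blockLS_eq_submatrix, dotProduct_mulVec x, ← mulVec_transpose, transpose_submatrix,
      hsym.eq, dotProduct_comm]
  simp only [Rdiss, Fin.append_dotProduct_mulVec_append, zero_dotProduct, mulVec_zero,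
    dotProduct_zero, hSL, ← blockLL_eq_submatrix, ← blockLS_eq_submatrix]
  ring

theorem IsZmat.blockLS_nonpos {Y : Matrix (Fin (n + m)) (Fin (n + m)) ℝ} (hZ : IsZmat Y)
    (i : Fin n) (j : Fin m) : blockLS n m Y i j ≤ 0 :=
  hZ _ _ (Fin.castAdd_ne_natAdd i j)

theorem IsZmat.blockLS_mulVec_nonpos {Y : Matrix (Fin (n + m)) (Fin (n + m)) ℝ}
    (hZ : IsZmat Y) {v : Fin m → ℝ} (hv : 0 ≤ v) : blockLS n m Y *ᵥ v ≤ 0 := by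
  intro i
  simp only [mulVec, dotProduct, Pi.zero_apply]
  exact Finset.sum_nonpos fun j _ =>
    mul_nonpos_of_nonpos_of_nonneg (hZ.blockLS_nonpos i j) (hv j)

theorem IsIrred.exists_blockLS_ne_zero {Y : Matrix (Fin (n + m)) (Fin (n + m)) ℝ}
    (hirr : IsIrred Y) (hn : 0 < n) (hm : 0 < m) : ∃ i j, blockLS n m Y i j ≠ 0 := by
  classical
  let loads : Finset (Fin (n + m)) := Finset.univ.map (Fin.castAddEmb m)
  have hloads : loads.Nonempty := ⟨_, Finset.mem_map_of_mem _ (Finset.mem_univ ⟨0, hn⟩)⟩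
  have hsources : loads ≠ Finset.univ := fun h => by
    have : Fin.natAdd n ⟨0, hm⟩ ∈ loads := h ▸ Finset.mem_univ _
    simp only [loads, Finset.mem_map, Finset.mem_univ, true_and, Fin.coe_castAddEmb] at this
    exact this.elim fun i hi => Fin.castAdd_ne_natAdd i _ hi
  obtain ⟨i, hi, j, hj, hij⟩ := hirr loads hloads hsources
  obtain ⟨i, -, rfl⟩ := Finset.mem_map.1 hi
  induction j using Fin.addCases with
  | left j => simp [loads] at hj
  | right j => exact ⟨i, j, hij⟩

theorem exists_blockLS_mulVec_neg {Y : Matrix (Fin (n + m)) (Fin (n + m)) ℝ}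
    (hZ : IsZmat Y) (hirr : IsIrred Y) (hn : 0 < n) (hm : 0 < m) {v : Fin m → ℝ}
    (hv : ∀ j, 0 < v j) : ∃ i, (blockLS n m Y *ᵥ v) i < 0 := by
  obtain ⟨i, j, hij⟩ := hirr.exists_blockLS_ne_zero hn hm
  refine ⟨i, Finset.sum_neg' (fun k _ => ?_) ⟨j, Finset.mem_univ _, ?_⟩⟩
  · exact mul_nonpos_of_nonpos_of_nonneg (hZ.blockLS_nonpos i k) (hv k).le
  · exact mul_neg_of_neg_of_pos ((hZ.blockLS_nonpos i j).lt_of_ne hij) (hv j)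

theorem Rdiss_of_Pc_eq {Y : Matrix (Fin (n + m)) (Fin (n + m)) ℝ} (hsym : Y.IsSymm)
    {VS : Fin m → ℝ} {I VL P x : Fin n → ℝ} (hI : I = -(blockLS n m Y *ᵥ VS))
    (hVL : blockLL n m Y *ᵥ VL = I) (hx : Pc (blockLL n m Y) VL x = P) :
    Rdiss n m Y VS x = Rdiss n m Y VS 0 - ∑ i, P i - x ⬝ᵥ I := by
  subst hI
  have hP := sum_Pc (blockLL n m Y) VL x
  rw [hx, mulVec_sub, dotProduct_sub, hVL, dotProduct_neg] at hP
  rw [Rdiss_eq hsym, dotProduct_neg]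
  linarith

end

theorem stmt_2_general (n m : ℕ) (hn : 1 ≤ n) (hm : 1 ≤ m)
    (Y : Matrix (Fin (n + m)) (Fin (n + m)) ℝ)
    (hsym : Y.IsSymm)
    (hZ : IsZmat Y)
    (hirr : IsIrred Y)
    (VS : Fin m → ℝ) (hVS : ∀ i, 0 < VS i)
    (hPD : (blockLL n m Y).PosDef)
    (Istar : Fin n → ℝ) (hIstar : Istar = -(blockLS n m Y *ᵥ VS))
    (VLstar : Fin n → ℝ) (hVLstar : VLstar = (blockLL n m Y)⁻¹ *ᵥ Istar)
    (P : Fin n → ℝ)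
    (xt : Fin n → ℝ)
    (hxt : (∀ i, 0 < xt i) ∧ Pc (blockLL n m Y) VLstar xt = P) :
    -- high-voltage solutions are dissipation-minimizing
    ((∀ x, (∀ i, 0 < x i) → Pc (blockLL n m Y) VLstar x = P → ∀ i, x i ≤ xt i) →
      ∀ x, (∀ i, 0 < x i) → Pc (blockLL n m Y) VLstar x = P →
        Rdiss n m Y VS xt ≤ Rdiss n m Y VS x) ∧
    -- strict high-voltage solutions are the unique dissipation-minimizing operating points
    ((∀ x, (∀ i, 0 < x i) → Pc (blockLL n m Y) VLstar x = P → x ≠ xt → ∀ i, x i < xt i) →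
      (∀ x, (∀ i, 0 < x i) → Pc (blockLL n m Y) VLstar x = P → x ≠ xt →
        Rdiss n m Y VS xt < Rdiss n m Y VS x) ∧
      (∀ x, (∀ i, 0 < x i) → Pc (blockLL n m Y) VLstar x = P →
        (∀ z, (∀ i, 0 < z i) → Pc (blockLL n m Y) VLstar z = P →
          Rdiss n m Y VS x ≤ Rdiss n m Y VS z) → x = xt)) := by
  have hVL : blockLL n m Y *ᵥ VLstar = Istar := by
    rw [hVLstar, mulVec_mulVec, mul_nonsing_inv _ ((isUnit_iff_isUnit_det _).1 hPD.isUnit),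
      one_mulVec]
  have hR : ∀ x, Pc (blockLL n m Y) VLstar x = P →
      Rdiss n m Y VS x = Rdiss n m Y VS 0 - ∑ i, P i - x ⬝ᵥ Istar :=
    fun x hx => Rdiss_of_Pc_eq hsym hIstar hVL hx
  have hI_nonneg : 0 ≤ Istar :=
    hIstar ▸ neg_nonneg.2 (hZ.blockLS_mulVec_nonpos fun j => (hVS j).le)
  have hI_pos : ∃ i, 0 < Istar i := by
    obtain ⟨i, hi⟩ := exists_blockLS_mulVec_neg hZ hirr hn hm hVS
    exact ⟨i, hIstar ▸ neg_pos.2 hi⟩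
  refine ⟨fun hhv x hx hxP => ?_, fun hshv => ?_⟩
  · have := dotProduct_le_dotProduct_of_nonneg_right (hhv x hx hxP) hI_nonneg
    rw [hR x hxP, hR xt hxt.2]
    linarith
  · have hlt : ∀ x, (∀ i, 0 < x i) → Pc (blockLL n m Y) VLstar x = P → x ≠ xt →
        Rdiss n m Y VS xt < Rdiss n m Y VS x := fun x hx hxP hne => by
      have := dotProduct_lt_dotProduct_of_lt_of_nonneg (hshv x hx hxP hne) hI_nonneg hI_pos
      rw [hR x hxP, hR xt hxt.2]
      linarith
    exact ⟨hlt, fun x hx hxP hmin => by_contra fun hne =>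
      (hlt x hx hxP hne).not_ge (hmin xt hxt.1 hxt.2)⟩

theorem stmt_2 (n m : ℕ) (hn : 1 ≤ n) (hm : 1 ≤ m)
    (Y : Matrix (Fin (n + m)) (Fin (n + m)) ℝ)
    (hsym : Y.IsSymm)
    (hZ : IsZmat Y)
    (hrow : Y *ᵥ (fun _ => (1 : ℝ)) = 0)
    (hirr : IsIrred Y)
    (VS : Fin m → ℝ) (hVS : ∀ i, 0 < VS i)
    (hPD : (blockLL n m Y).PosDef)
    (Istar : Fin n → ℝ) (hIstar : Istar = -(blockLS n m Y *ᵥ VS))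
    (VLstar : Fin n → ℝ) (hVLstar : VLstar = (blockLL n m Y)⁻¹ *ᵥ Istar)
    (P : Fin n → ℝ)
    (xt : Fin n → ℝ)
    (hxt : (∀ i, 0 < xt i) ∧ Pc (blockLL n m Y) VLstar xt = P) :
    -- high-voltage solutions are dissipation-minimizing
    ((∀ x, (∀ i, 0 < x i) → Pc (blockLL n m Y) VLstar x = P → ∀ i, x i ≤ xt i) →
      ∀ x, (∀ i, 0 < x i) → Pc (blockLL n m Y) VLstar x = P →
        Rdiss n m Y VS xt ≤ Rdiss n m Y VS x) ∧
    -- strict high-voltage solutions are the unique dissipation-minimizing operating points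
    ((∀ x, (∀ i, 0 < x i) → Pc (blockLL n m Y) VLstar x = P → x ≠ xt → ∀ i, x i < xt i) →
      (∀ x, (∀ i, 0 < x i) → Pc (blockLL n m Y) VLstar x = P → x ≠ xt →
        Rdiss n m Y VS xt < Rdiss n m Y VS x) ∧
      (∀ x, (∀ i, 0 < x i) → Pc (blockLL n m Y) VLstar x = P →
        (∀ z, (∀ i, 0 < z i) → Pc (blockLL n m Y) VLstar z = P →
          Rdiss n m Y VS x ≤ Rdiss n m Y VS z) → x = xt)) :=
  stmt_2_general n m hn hm Y hsym hZ hirr VS hVS hPD Istar hIstar VLstar hVLstar P xt hxt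
end
end

section
/- For every λ ∈ Λ and every x ∈ ℝⁿ: λᵀ P_c(x) = ‖φ(λ)‖_{h(λ)}² − ‖φ(λ) − x‖_{h(λ)}². Consequently λᵀ P_c(x) ≤ ‖φ(λ)‖_{h(λ)}² = λᵀ P_c(φ(λ)), with equality if and only if x = φ(λ); and if P_c(x) = P_c(φ(λ)) then x = φ(λ). -/
open Matrix Set

noncomputable section

/-
Write `D = [λ]` and `h = h(λ)`. Since `Y` is symmetric, `xᵀ D Y x = xᵀ h x`, so
`λᵀ P_c(x) = xᵀ D Y V* − xᵀ D Y x = 2 xᵀ h φ − xᵀ h x`, because `h φ = ½ D Y V*`.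
Completing the square in the `h`-inner product turns this into `‖φ‖² − ‖φ − x‖²`; the
remaining claims follow from positive definiteness of `h`, since `‖v‖_h = 0` only for `v = 0`.
-/

namespace Matrix

variable {ι R : Type*} [Fintype ι] [CommRing R]

theorem IsSymm.dotProduct_mulVec_comm {A : Matrix ι ι R} (hA : A.IsSymm) (u v : ι → R) :
    u ⬝ᵥ (A *ᵥ v) = v ⬝ᵥ (A *ᵥ u) := by
  rw [← dotProduct_transpose_mulVec, hA.eq]

theorem IsSymm.sub_dotProduct_mulVec_sub {A : Matrix ι ι R} (hA : A.IsSymm) (u v : ι → R) :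
    (u - v) ⬝ᵥ (A *ᵥ (u - v)) = u ⬝ᵥ (A *ᵥ u) - 2 * (v ⬝ᵥ (A *ᵥ u)) + v ⬝ᵥ (A *ᵥ v) := by
  rw [mulVec_sub, sub_dotProduct, dotProduct_sub, dotProduct_sub, hA.dotProduct_mulVec_comm u v]
  ring

end Matrix

section

variable {k : ℕ} {Y : Matrix (Fin k) (Fin k) ℝ} {l : Fin k → ℝ}

theorem hmat_isSymm (hY : Y.IsSymm) (l : Fin k → ℝ) : (hmat Y l).IsSymm := by
  simp only [IsSymm, hmat, transpose_smul, transpose_add, transpose_mul, hY.eq,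
    diagonal_transpose, add_comm]

theorem qnorm_eq_dotProduct_diagonal_mulVec_mulVec (hY : Y.IsSymm) (l x : Fin k → ℝ) :
    qnorm Y l x = x ⬝ᵥ (diagonal l *ᵥ (Y *ᵥ x)) := by
  have hYD : Y * diagonal l = (diagonal l * Y)ᵀ := by
    rw [transpose_mul, hY.eq, diagonal_transpose]
  rw [qnorm, hmat, smul_mulVec, add_mulVec, dotProduct_smul, dotProduct_add, hYD,
    dotProduct_transpose_mulVec, smul_eq_mul, mulVec_mulVec]
  ring

theorem dotProduct_Pc (hY : Y.IsSymm) (l Vs x : Fin k → ℝ) :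
    l ⬝ᵥ Pc Y Vs x = x ⬝ᵥ (diagonal l *ᵥ (Y *ᵥ Vs)) - qnorm Y l x := by
  have hPc : l ⬝ᵥ Pc Y Vs x = x ⬝ᵥ (diagonal l *ᵥ (Y *ᵥ (Vs - x))) := by
    simp only [Pc, dotProduct, mulVec_diagonal]
    exact Finset.sum_congr rfl fun i _ => by ring
  rw [hPc, qnorm_eq_dotProduct_diagonal_mulVec_mulVec hY, mulVec_sub, mulVec_sub, dotProduct_sub]

theorem hmat_mulVec_phiv (hl : IsUnit (hmat Y l)) (Vs : Fin k → ℝ) :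
    hmat Y l *ᵥ phiv Y Vs l = (1 / 2 : ℝ) • (diagonal l *ᵥ (Y *ᵥ Vs)) := by
  rw [phiv, mulVec_smul, mulVec_mulVec,
    mul_nonsing_inv _ ((isUnit_iff_isUnit_det _).mp hl), one_mulVec]

theorem dotProduct_Pc_eq_qnorm_sub (hY : Y.IsSymm) (hl : IsUnit (hmat Y l)) (Vs x : Fin k → ℝ) :
    l ⬝ᵥ Pc Y Vs x = qnorm Y l (phiv Y Vs l) - qnorm Y l (phiv Y Vs l - x) := by
  have hx : x ⬝ᵥ (diagonal l *ᵥ (Y *ᵥ Vs)) = 2 * (x ⬝ᵥ (hmat Y l *ᵥ phiv Y Vs l)) := by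
    rw [hmat_mulVec_phiv hl, dotProduct_smul, smul_eq_mul]
    ring
  simp only [dotProduct_Pc hY, hx, qnorm, (hmat_isSymm hY l).sub_dotProduct_mulVec_sub]
  ring

theorem qnorm_nonneg (hl : (hmat Y l).PosDef) (x : Fin k → ℝ) : 0 ≤ qnorm Y l x := by
  simpa [qnorm] using hl.posSemidef.dotProduct_mulVec_nonneg x

theorem qnorm_eq_zero_iff (hl : (hmat Y l).PosDef) {x : Fin k → ℝ} : qnorm Y l x = 0 ↔ x = 0 := by
  refine ⟨fun hx => ?_, fun hx => by simp [hx, qnorm]⟩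
  by_contra hne
  exact (hl.dotProduct_mulVec_pos hne).ne' (by simpa [qnorm] using hx)

end

theorem stmt_10_general (n : ℕ)
    (Y : Matrix (Fin n) (Fin n) ℝ)
    (hPD : Y.PosDef)
    (Vs : Fin n → ℝ)
    (l : Fin n → ℝ) (hl : (hmat Y l).PosDef) (x : Fin n → ℝ) :
    l ⬝ᵥ Pc Y Vs x = qnorm Y l (phiv Y Vs l) - qnorm Y l (phiv Y Vs l - x) ∧
    l ⬝ᵥ Pc Y Vs x ≤ qnorm Y l (phiv Y Vs l) ∧
    qnorm Y l (phiv Y Vs l) = l ⬝ᵥ Pc Y Vs (phiv Y Vs l) ∧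
    (l ⬝ᵥ Pc Y Vs x = qnorm Y l (phiv Y Vs l) ↔ x = phiv Y Vs l) ∧
    (Pc Y Vs x = Pc Y Vs (phiv Y Vs l) → x = phiv Y Vs l) := by
  have hY : Y.IsSymm := isHermitian_iff_isSymm.mp hPD.isHermitian
  have key := dotProduct_Pc_eq_qnorm_sub hY hl.isUnit Vs
  have at_phi : qnorm Y l (phiv Y Vs l) = l ⬝ᵥ Pc Y Vs (phiv Y Vs l) := by
    rw [key, sub_self, (qnorm_eq_zero_iff hl).mpr rfl, sub_zero]
  have eq_iff : l ⬝ᵥ Pc Y Vs x = qnorm Y l (phiv Y Vs l) ↔ x = phiv Y Vs l := by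
    rw [key, sub_eq_self, qnorm_eq_zero_iff hl, sub_eq_zero, eq_comm]
  refine ⟨key x, ?_, at_phi, eq_iff, fun hPc => eq_iff.mp (by rw [hPc, at_phi])⟩
  rw [key x]
  exact sub_le_self _ (qnorm_nonneg hl _)

theorem stmt_10 (n : ℕ) (hn : 1 ≤ n)
    (Y : Matrix (Fin n) (Fin n) ℝ)
    (hPD : Y.PosDef)
    (hZ : IsZmat Y)
    (hirr : IsIrred Y)
    (Vs : Fin n → ℝ) (hVs : ∀ i, 0 < Vs i)
    (hInn : ∀ i, 0 ≤ (Y *ᵥ Vs) i) (hIne : Y *ᵥ Vs ≠ 0)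
    (l : Fin n → ℝ) (hl : (hmat Y l).PosDef) (x : Fin n → ℝ) :
    l ⬝ᵥ Pc Y Vs x = qnorm Y l (phiv Y Vs l) - qnorm Y l (phiv Y Vs l - x) ∧
    l ⬝ᵥ Pc Y Vs x ≤ qnorm Y l (phiv Y Vs l) ∧
    qnorm Y l (phiv Y Vs l) = l ⬝ᵥ Pc Y Vs (phiv Y Vs l) ∧
    (l ⬝ᵥ Pc Y Vs x = qnorm Y l (phiv Y Vs l) ↔ x = phiv Y Vs l) ∧
    (Pc Y Vs x = Pc Y Vs (phiv Y Vs l) → x = phiv Y Vs l) :=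
  stmt_10_general n Y hPD Vs l hl x
end
end
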